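/- Let F be a perfect analytic field of characteristic p. Any stable element of W(o_F) divisible by a primitive element of W(o_F) must equal 0. -/

import Mathlib

open scoped NNReal ENNReal

set_option synthInstance.maxHeartbeats 1000000
set_option maxHeartbeats 1000000

/-- The valuation ring `o_F` of an analytic field `F` (a field complete with respect to a
multiplicative nonarchimedean norm, given by a rank-one valuation). -/
noncomputable abbrev OK (F : Type*) [Field F] [Valued F ℝ≥0] : Subring F :=
  Valued.v.integer

/-- The norm `|x̄_n|'` of the `n`-th Teichmüller coordinate of a Witt vector
`x = Σ pⁿ [x̄_n] ∈ W(o_F)` over a perfect field: since `x̄_n = (x.coeff n)^(p⁻ⁿ)`,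
this is `|x.coeff n|'^(p⁻ⁿ)`. -/
noncomputable def tcNorm (p : ℕ) [Fact p.Prime] (F : Type*) [Field F] [Valued F ℝ≥0]
    (x : WittVector p (OK F)) (n : ℕ) : ℝ≥0 :=
  Valued.v ((x.coeff n : OK F) : F) ^ ((((p : ℝ))⁻¹ ^ n : ℝ))

/-- A Witt vector `x = Σ pⁿ [x̄_n] ∈ W(o_F)` is stable if `|x̄_n|' ≤ |x̄_0|'`
for all `n > 0`. -/
def IsStable (p : ℕ) [Fact p.Prime] (F : Type*) [Field F] [Valued F ℝ≥0]
    (x : WittVector p (OK F)) : Prop :=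
  ∀ n : ℕ, 0 < n → tcNorm p F x n ≤ tcNorm p F x 0

/-- A Witt vector `z = Σ pⁿ [z̄_n] ∈ W(o_F)` is primitive if `|z̄_0|' = p⁻¹` and
`|z̄_1|' = 1`; in terms of Witt coordinates, `|z.coeff 0|' = p⁻¹` and `|z.coeff 1|' = 1`. -/
def IsPrimitive (p : ℕ) [Fact p.Prime] (F : Type*) [Field F] [Valued F ℝ≥0]
    (z : WittVector p (OK F)) : Prop :=
  Valued.v ((z.coeff 0 : OK F) : F) = (p : ℝ≥0)⁻¹ ∧
  Valued.v ((z.coeff 1 : OK F) : F) = 1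

/-!
Divisibility by a Teichmüller representative is read off coordinatewise:
`[c] ∣ w ↔ ∀ n, c ^ p ^ n ∣ w.coeff n`. Since `z₁` is a unit and `o_F` is perfect,
`z = [z₀] + u * p` with `u` a unit. Write `x = z * y`. If `[b] ∣ y`, then `z₀ * b ∣ x₀ = z₀ * y₀`,
so stability of `x` gives `[z₀ * b] ∣ x`; hence `[z₀ * b]` divides `x - [z₀] * y = u * y * p`,
and in a perfect ring of characteristic `p` the factor `p` can be cancelled. So `[z₀ ^ k] ∣ y`
for all `k`, and as `|z₀| = p⁻¹ < 1` every coordinate of `y` vanishes.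
-/

namespace WittVector

variable {p : ℕ} [hp : Fact p.Prime]

local notation "𝕎" => WittVector p

theorem teichmuller_mul_eq_mk_of_invertible {S : Type*} [CommRing S] [Invertible (p : S)]
    (a : S) (w : 𝕎 S) : teichmuller p a * w = mk p fun n => a ^ p ^ n * w.coeff n := by
  apply (ghostMap.bijective_of_invertible p S).1
  funext n
  rw [map_mul, Pi.mul_apply, ghostMap_apply, ghostMap_apply, ghostMap_apply,
    ghostComponent_teichmuller, ghostComponent_apply, ghostComponent_apply, aeval_wittPolynomial,
    aeval_wittPolynomial, Finset.mul_sum]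
  refine Finset.sum_congr rfl fun i hi => ?_
  have hin : i + (n - i) = n := Nat.add_sub_cancel' (Nat.lt_succ_iff.mp (Finset.mem_range.mp hi))
  rw [coeff_mk, mul_pow, ← pow_mul, ← pow_add, hin]
  ring

/- The identity is universal: it holds for `a = X none`, `w = (X (some n))ₙ` over `ℤ`,
because `W(MvPolynomial _ ℤ)` embeds into `W(MvPolynomial _ ℚ)`, where the ghost map is
injective. -/
theorem teichmuller_mul_coeff {R : Type*} [CommRing R] (a : R) (w : 𝕎 R) (n : ℕ) :
    (teichmuller p a * w).coeff n = a ^ p ^ n * w.coeff n := by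
  let f : MvPolynomial (Option ℕ) ℤ →+* R :=
    (MvPolynomial.aeval fun i => i.elim a w.coeff).toRingHom
  let W : 𝕎 (MvPolynomial (Option ℕ) ℤ) := mk p fun n => MvPolynomial.X (some n)
  have hW : map f W = w := by
    ext n
    simp [f, W, map_coeff]
  have universal : teichmuller p (MvPolynomial.X none) * W
      = mk p fun n => MvPolynomial.X none ^ p ^ n * W.coeff n := by
    apply map_injective (MvPolynomial.map (Int.castRingHom ℚ))
      (MvPolynomial.map_injective _ Int.cast_injective)
    let _ : Invertible (p : ℚ) := invertibleOfNonzero (by exact_mod_cast hp.out.ne_zero)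
    rw [map_mul, map_teichmuller, teichmuller_mul_eq_mk_of_invertible]
    ext n
    simp [map_coeff]
  have := congrArg (fun y => (map f y).coeff n) universal
  simp only [map_mul, map_teichmuller, hW, map_coeff, coeff_mk] at this
  simpa [f, W] using this

theorem teichmuller_dvd_iff {R : Type*} [CommRing R] {c : R} {w : 𝕎 R} :
    teichmuller p c ∣ w ↔ ∀ n, c ^ p ^ n ∣ w.coeff n := by
  constructor
  · rintro ⟨w', rfl⟩ n
    rw [teichmuller_mul_coeff]
    exact dvd_mul_right _ _
  · intro h
    choose q hq using h
    refine ⟨mk p q, ext fun n => ?_⟩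
    rw [teichmuller_mul_coeff, coeff_mk, hq]

theorem teichmuller_add_verschiebung_shift {R : Type*} [CommRing R] (x : 𝕎 R) :
    teichmuller p (x.coeff 0) + verschiebung (x.shift 1) = x := by
  have disjoint (n : ℕ) : (teichmuller p (x.coeff 0)).coeff n = 0 ∨
      (verschiebung (x.shift 1)).coeff n = 0 := by
    cases n with
    | zero => exact .inr (verschiebung_coeff_zero _)
    | succ n => exact .inl (teichmuller_coeff_pos p _ _ n.succ_pos)
  ext n
  rw [coeff_add_of_disjoint n _ _ disjoint]
  cases n with
  | zero => rw [teichmuller_coeff_zero, verschiebung_coeff_zero, add_zero]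
  | succ n => rw [teichmuller_coeff_pos p _ _ n.succ_pos, verschiebung_coeff_succ, shift_coeff,
      zero_add, add_comm]

section Perfect

variable {R : Type*} [CommRing R] [CharP R p] [PerfectRing R p]

theorem exists_unit_eq_teichmuller_add_mul_p {x : 𝕎 R} (hx : IsUnit (x.coeff 1)) :
    ∃ u : (𝕎 R)ˣ, x = teichmuller p (x.coeff 0) + u * p := by
  let root := (_root_.frobeniusEquiv R p).symm
  let u : 𝕎 R := mk p fun n => root (x.coeff (n + 1))
  have hu : IsUnit (u.coeff 0) := (isUnit_map_iff root _).mpr hx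
  refine ⟨mkUnit hu.unit_spec.symm, ?_⟩
  rw [coe_mkUnit, ← verschiebung_frobenius]
  convert (teichmuller_add_verschiebung_shift x).symm using 3
  ext n
  rw [coeff_frobenius_charP, shift_coeff, coeff_mk, frobeniusEquiv_symm_pow_p, add_comm]

/- `(w * p).coeff (n + 1) = w.coeff n ^ p`, and `a ^ p ∣ b ^ p → a ∣ b` in a perfect ring. -/
theorem teichmuller_dvd_of_dvd_mul_p {c : R} {w : 𝕎 R} (h : teichmuller p c ∣ w * p) :
    teichmuller p c ∣ w := by
  rw [teichmuller_dvd_iff] at h ⊢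
  intro n
  obtain ⟨q, hq⟩ := h (n + 1)
  rw [mul_charP_coeff_succ, pow_succ, pow_mul] at hq
  refine ⟨(_root_.frobeniusEquiv R p).symm q, injective_frobenius R p ?_⟩
  rw [frobenius_def, frobenius_def, mul_pow, frobeniusEquiv_symm_pow_p, hq]

theorem teichmuller_pow_dvd_of_eq_mul {π : R} {u : (𝕎 R)ˣ} {x y : 𝕎 R}
    (hx : teichmuller p (x.coeff 0) ∣ x) (hxy : x = (teichmuller p π + u * p) * y) (k : ℕ) :
    teichmuller p (π ^ k) ∣ y := by
  induction k with
  | zero => simp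
  | succ k ih =>
    have hy₀ : π ^ k ∣ y.coeff 0 := by simpa using teichmuller_dvd_iff.mp ih 0
    have hx₀ : x.coeff 0 = π * y.coeff 0 := by
      rw [hxy, mul_coeff_zero, add_coeff_zero, teichmuller_coeff_zero, mul_charP_coeff_zero,
        add_zero]
    have hdx : teichmuller p (π ^ (k + 1)) ∣ x := by
      refine (map_dvd (teichmuller p) ?_).trans hx
      rw [hx₀, pow_succ']
      exact mul_dvd_mul_left π hy₀
    have hdy : teichmuller p (π ^ (k + 1)) ∣ teichmuller p π * y := by
      rw [pow_succ', map_mul]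
      exact mul_dvd_mul_left _ ih
    have hdp : teichmuller p (π ^ (k + 1)) ∣ u * y * p := by
      have h := dvd_sub hdx hdy
      rwa [hxy, add_mul, add_sub_cancel_left, mul_right_comm] at h
    exact Units.dvd_mul_left.mp (teichmuller_dvd_of_dvd_mul_p hdp)

end Perfect

end WittVector

theorem charP_of_expChar_of_prime (R : Type*) [AddMonoidWithOne R] (p : ℕ) [Fact p.Prime]
    [h : ExpChar R p] : CharP R p := by
  rcases h with _ | _
  · exact absurd Fact.out Nat.not_prime_one
  · assumption

namespace Valuation

variable {K : Type*} [Field K]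

theorem perfectRing_integer {Γ₀ : Type*} [LinearOrderedCommGroupWithZero Γ₀]
    (v : Valuation K Γ₀) (p : ℕ) [Fact p.Prime] [CharP K p] [PerfectRing K p] :
    PerfectRing v.integer p := by
  refine PerfectRing.ofSurjective _ p fun a => ⟨⟨(frobeniusEquiv K p).symm a, ?_⟩, ?_⟩
  · rw [mem_integer_iff, ← pow_le_one_iff (Fact.out : p.Prime).ne_zero, ← map_pow,
      frobeniusEquiv_symm_pow_p]
    exact a.2
  · exact Subtype.ext (frobeniusEquiv_symm_pow_p K p a)

theorem eq_zero_of_forall_pow_dvd (v : Valuation K ℝ≥0) {π a : v.integer} (hπ : v π < 1)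
    (h : ∀ k, π ^ k ∣ a) : a = 0 := by
  by_contra ha
  have hpos : 0 < v a := by
    rw [pos_iff_ne_zero, ne_eq, zero_iff]
    exact_mod_cast ha
  obtain ⟨k, hk⟩ := exists_pow_lt_of_lt_one hpos hπ
  have hle := (integer.integers v).le_of_dvd (h k)
  rw [map_pow, map_pow] at hle
  exact hle.not_gt hk

end Valuation

section AnalyticField

variable {p : ℕ} [Fact p.Prime] {F : Type*} [Field F] [Valued F ℝ≥0]

theorem tcNorm_pow (x : WittVector p (OK F)) (n : ℕ) :
    tcNorm p F x n ^ p ^ n = Valued.v (x.coeff n : F) := by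
  have hp : (p : ℝ) ≠ 0 := Nat.cast_ne_zero.mpr (Fact.out : p.Prime).ne_zero
  rw [tcNorm, ← NNReal.rpow_natCast, ← NNReal.rpow_mul, Nat.cast_pow, ← mul_pow,
    inv_mul_cancel₀ hp, one_pow, NNReal.rpow_one]

theorem IsStable.teichmuller_coeff_zero_dvd {x : WittVector p (OK F)} (hx : IsStable p F x) :
    WittVector.teichmuller p (x.coeff 0) ∣ x := by
  refine WittVector.teichmuller_dvd_iff.mpr fun n => (Valuation.integer.integers _).dvd_of_le ?_
  rcases n.eq_zero_or_pos with rfl | hn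
  · simp
  · calc Valued.v (x.coeff n : F) = tcNorm p F x n ^ p ^ n := (tcNorm_pow x n).symm
      _ ≤ tcNorm p F x 0 ^ p ^ n := pow_le_pow_left₀ zero_le (hx n hn) _
      _ = Valued.v ((x.coeff 0 ^ p ^ n : OK F) : F) := by simp [tcNorm]

theorem IsPrimitive.valuation_coeff_zero_lt_one {z : WittVector p (OK F)}
    (hz : IsPrimitive p F z) : Valued.v (z.coeff 0 : F) < 1 := by
  rw [hz.1, inv_lt_one₀ (by exact_mod_cast (Fact.out : p.Prime).pos)]
  exact_mod_cast (Fact.out : p.Prime).one_lt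

theorem IsPrimitive.isUnit_coeff_one {z : WittVector p (OK F)} (hz : IsPrimitive p F z) :
    IsUnit (z.coeff 1) :=
  (Valuation.integer.integers _).isUnit_of_one' hz.2

end AnalyticField

theorem stable_dvd_primitive_eq_zero_general (p : ℕ) [Fact p.Prime] (F : Type*) [Field F]
    [Valued F ℝ≥0] [ExpChar F p] [PerfectRing F p]
    (x z : WittVector p (OK F)) (hx : IsStable p F x) (hz : IsPrimitive p F z)
    (hdvd : z ∣ x) : x = 0 := by
  have := charP_of_expChar_of_prime F p
  have := CharP.subring' F p (OK F)
  have : PerfectRing (OK F) p := Valuation.perfectRing_integer _ p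
  obtain ⟨y, rfl⟩ := hdvd
  obtain ⟨u, hu⟩ := WittVector.exists_unit_eq_teichmuller_add_mul_p hz.isUnit_coeff_one
  have hdiv (k : ℕ) : WittVector.teichmuller p (z.coeff 0 ^ k) ∣ y :=
    WittVector.teichmuller_pow_dvd_of_eq_mul hx.teichmuller_coeff_zero_dvd (by rw [← hu]) k
  have hy : y = 0 := by
    ext1 n
    rw [WittVector.zero_coeff]
    refine Valued.v.eq_zero_of_forall_pow_dvd hz.valuation_coeff_zero_lt_one fun k => ?_
    exact (dvd_pow_self _ (pow_ne_zero n (Fact.out : p.Prime).ne_zero)).trans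
      (WittVector.teichmuller_dvd_iff.mp (hdiv k) n)
  rw [hy, mul_zero]

/-- Any stable element of `W(o_F)` divisible by a primitive element must equal `0`. -/
theorem stable_dvd_primitive_eq_zero (p : ℕ) [Fact p.Prime] (F : Type*) [Field F]
    [Valued F ℝ≥0] [CompleteSpace F] [ExpChar F p] [PerfectRing F p]
    (x z : WittVector p (OK F)) (hx : IsStable p F x) (hz : IsPrimitive p F z)
    (hdvd : z ∣ x) : x = 0 :=
  stable_dvd_primitive_eq_zero_general p F x z hx hz hdvd
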